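/- Let G=(V,E) be a finite simple graph with a decomposition V = A ∪ B ∪ C satisfying properties (1): d_B(a) ≥ d_A(a)+max{1,d_C(a)} for a ∈ A, and (2): d_A(b) ≥ d_B(b)+max{1,d_C(b)} for b ∈ B. Then #E(A,B) ≥ #E(A,A) + #E(B,B) + (|A|+|B|)/2. -/

import Mathlib

open Finset

variable {V : Type*} [Fintype V] [DecidableEq V]

/-- Number of neighbors of `v` lying in `S`. -/
def degIn (G : SimpleGraph V) [DecidableRel G.Adj] (v : V) (S : Finset V) : ℕ :=
  (S.filter (G.Adj v)).card

/-- Number of edges with one endpoint in `X` and the other in `Y`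
(each edge counted once; for `X = Y` this is the number of edges inside `X`). -/
def eBtw (G : SimpleGraph V) [DecidableRel G.Adj] (X Y : Finset V) : ℕ :=
  (G.edgeFinset.filter (fun e => ∃ x ∈ X, ∃ y ∈ Y, e = s(x, y))).card

/-! Summing (1) over `A` gives `2 #E(A,A) + |A| ≤ #E(A,B)`: the sum of `d_A` over `A` counts every
edge inside `A` twice, the sum of `d_B` over `A` counts every `A`–`B` edge once. Summing (2) over `B`
gives `2 #E(B,B) + |B| ≤ #E(A,B)`, and adding the two inequalities proves the bound. -/

namespace SimpleGraph

variable (G : SimpleGraph V) [DecidableRel G.Adj]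

def adjPairs (X Y : Finset V) : Finset (V × V) :=
  (X ×ˢ Y).filter fun p => G.Adj p.1 p.2

omit [Fintype V] [DecidableEq V] in
lemma sum_degIn_eq_card_adjPairs (X Y : Finset V) :
    ∑ x ∈ X, degIn G x Y = #(G.adjPairs X Y) := by
  simp only [degIn, adjPairs, card_filter, sum_product]

lemma eBtw_eq_card_image_adjPairs (X Y : Finset V) :
    eBtw G X Y = #((G.adjPairs X Y).image fun p => s(p.1, p.2)) := by
  rw [eBtw]
  congr 1
  ext e
  simp only [mem_filter, mem_image, adjPairs, mem_product, mem_edgeFinset]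
  constructor
  · rintro ⟨he, x, hx, y, hy, rfl⟩
    exact ⟨(x, y), ⟨⟨hx, hy⟩, he⟩, rfl⟩
  · rintro ⟨⟨x, y⟩, ⟨⟨hx, hy⟩, hxy⟩, rfl⟩
    exact ⟨hxy, x, hx, y, hy, rfl⟩

lemma eBtw_comm (X Y : Finset V) : eBtw G X Y = eBtw G Y X := by
  simp only [eBtw]
  congr 1
  ext e
  simp only [mem_filter]
  constructor <;>
  · rintro ⟨he, x, hx, y, hy, rfl⟩
    exact ⟨he, y, hy, x, hx, Sym2.eq_swap⟩

lemma card_adjPairs_of_disjoint {X Y : Finset V} (hXY : Disjoint X Y) :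
    #(G.adjPairs X Y) = eBtw G X Y := by
  rw [eBtw_eq_card_image_adjPairs, card_image_of_injOn]
  rintro ⟨x, y⟩ hxy ⟨x', y'⟩ hxy' h
  simp only [adjPairs, coe_filter, mem_product, Set.mem_ofPred_eq] at hxy hxy'
  rcases Sym2.eq_iff.mp h with ⟨rfl, rfl⟩ | ⟨rfl, -⟩
  · rfl
  · exact (Finset.disjoint_left.mp hXY hxy.1.1 hxy'.1.2).elim

lemma card_adjPairs_self (X : Finset V) : #(G.adjPairs X X) = 2 * eBtw G X X := by
  rw [eBtw_eq_card_image_adjPairs, card_eq_sum_card_image (fun p => s(p.1, p.2)), mul_comm]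
  refine sum_const_nat ?_
  simp only [mem_image]
  rintro _ ⟨⟨u, v⟩, huv, rfl⟩
  simp only [adjPairs, mem_filter, mem_product] at huv
  have hfiber : (G.adjPairs X X).filter (fun p => s(p.1, p.2) = s(u, v)) = {(u, v), (v, u)} := by
    ext ⟨x, y⟩
    simp only [adjPairs, mem_filter, mem_product, Sym2.eq_iff, mem_insert, mem_singleton,
      Prod.mk.injEq]
    constructor
    · exact fun h => h.2
    · rintro (⟨rfl, rfl⟩ | ⟨rfl, rfl⟩)
      · exact ⟨huv, Or.inl ⟨rfl, rfl⟩⟩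
      · exact ⟨⟨⟨huv.1.2, huv.1.1⟩, huv.2.symm⟩, Or.inr ⟨rfl, rfl⟩⟩
  rw [hfiber, card_pair]
  simpa [eq_comm] using G.ne_of_adj huv.2

lemma sum_degIn_self (X : Finset V) : ∑ x ∈ X, degIn G x X = 2 * eBtw G X X := by
  rw [sum_degIn_eq_card_adjPairs, card_adjPairs_self]

lemma sum_degIn_of_disjoint {X Y : Finset V} (hXY : Disjoint X Y) :
    ∑ x ∈ X, degIn G x Y = eBtw G X Y := by
  rw [sum_degIn_eq_card_adjPairs, card_adjPairs_of_disjoint G hXY]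

lemma two_mul_eBtw_self_add_card_le {X Y : Finset V} (hXY : Disjoint X Y)
    (h : ∀ x ∈ X, degIn G x X + 1 ≤ degIn G x Y) :
    2 * eBtw G X X + #X ≤ eBtw G X Y := by
  rw [← sum_degIn_self, ← sum_degIn_of_disjoint G hXY, card_eq_sum_ones, ← sum_add_distrib]
  exact sum_le_sum h

end SimpleGraph

open SimpleGraph in
theorem cut_lower_bound_general (G : SimpleGraph V) [DecidableRel G.Adj]
    (A B C : Finset V)
    (hAB : Disjoint A B)
    (h1 : ∀ a ∈ A, degIn G a A + max 1 (degIn G a C) ≤ degIn G a B)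
    (h2 : ∀ b ∈ B, degIn G b B + max 1 (degIn G b C) ≤ degIn G b A) :
    (eBtw G A A : ℚ) + eBtw G B B + (A.card + B.card) / 2 ≤ eBtw G A B := by
  have hA := two_mul_eBtw_self_add_card_le G hAB fun a ha =>
    (Nat.add_le_add_left (le_max_left _ _) _).trans (h1 a ha)
  have hB := two_mul_eBtw_self_add_card_le G hAB.symm fun b hb =>
    (Nat.add_le_add_left (le_max_left _ _) _).trans (h2 b hb)
  rw [eBtw_comm G B A] at hB
  have hsum : 2 * eBtw G A A + #A + (2 * eBtw G B B + #B) ≤ 2 * eBtw G A B := by omega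
  have hsumℚ : (2 * eBtw G A A + #A + (2 * eBtw G B B + #B) : ℚ) ≤ 2 * eBtw G A B := by
    exact_mod_cast hsum
  linarith

theorem cut_lower_bound (G : SimpleGraph V) [DecidableRel G.Adj]
    (A B C : Finset V)
    (hU : A ∪ B ∪ C = Finset.univ)
    (hAB : Disjoint A B) (hAC : Disjoint A C) (hBC : Disjoint B C)
    (h1 : ∀ a ∈ A, degIn G a A + max 1 (degIn G a C) ≤ degIn G a B)
    (h2 : ∀ b ∈ B, degIn G b B + max 1 (degIn G b C) ≤ degIn G b A) :
    (eBtw G A A : ℚ) + eBtw G B B + (A.card + B.card) / 2 ≤ eBtw G A B :=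
  cut_lower_bound_general G A B C hAB h1 h2
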